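/- arXiv:0709.2592 — 2 statements merged into one kernel-verified Lean document; each statement's English description precedes it below -/
import Mathlib

section
/- Let r ≥ 2 and m_1 ≥ m_2 ≥ ... ≥ m_r ≥ 1 be integers with m_1 ≥ 2. Then (r+1)·∑_{i=1}^r m_i² > (∑_{i=1}^r m_i)² + m_r·(r+1). -/
/-- Küchle's lemma: for `r ≥ 2` and integers `m 0 ≥ m 1 ≥ ... ≥ m (r-1) ≥ 1`
with `m 0 ≥ 2`, one has `(r+1)·∑ mᵢ² > (∑ mᵢ)² + m_r·(r+1)`. -/
theorem stmt_0 (r : ℕ) (hr : 2 ≤ r) (m : Fin r → ℤ)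
    (hanti : Antitone m)
    (hone : ∀ i, 1 ≤ m i)
    (htwo : 2 ≤ m ⟨0, by omega⟩) :
    ((r : ℤ) + 1) * (∑ i, (m i) ^ 2) >
      (∑ i, m i) ^ 2 + m ⟨r - 1, by omega⟩ * ((r : ℤ) + 1) := by
  set t : ℤ := m ⟨r - 1, by omega⟩ with ht
  set m0 : ℤ := m ⟨0, by omega⟩ with hm0
  have htle : ∀ i, t ≤ m i := fun i => hanti (by
    simp [Fin.le_def]; omega)
  have hm0ge : t ≤ m0 := htle _
  have ht1 : 1 ≤ t := hone _
  -- Cauchy-Schwarz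
  have hcs : (∑ i, m i) ^ 2 ≤ (r : ℤ) * ∑ i, (m i) ^ 2 := by
    have := sq_sum_le_card_mul_sum_sq (s := Finset.univ) (f := m)
    simpa using this
  -- Q ≥ t * S
  have hQ : t * ∑ i, m i ≤ ∑ i, (m i) ^ 2 := by
    rw [Finset.mul_sum]
    refine Finset.sum_le_sum fun i _ => ?_
    nlinarith [htle i, hone i, ht1]
  -- extra slack from m0
  have hextra : m0 ^ 2 - t * m0 ≤ ∑ i, ((m i) ^ 2 - t * m i) := by
    refine Finset.single_le_sum (f := fun i => (m i) ^ 2 - t * m i)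
      (fun i _ => ?_) (Finset.mem_univ _)
    show (0:ℤ) ≤ (m i) ^ 2 - t * m i
    nlinarith [htle i, hone i, ht1]
  have hextra' : m0 ^ 2 - t * m0 + t * ∑ i, m i ≤ ∑ i, (m i) ^ 2 := by
    rw [Finset.sum_sub_distrib, ← Finset.mul_sum] at hextra
    linarith
  -- S ≥ r * t
  have hS : (r : ℤ) * t ≤ ∑ i, m i := by
    calc (r : ℤ) * t = ∑ _i : Fin r, t := by
          simp [Finset.sum_const, mul_comm]
      _ ≤ ∑ i, m i := Finset.sum_le_sum fun i _ => htle i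
  -- Q > t * (r + 1)
  have hQbig : t * ((r : ℤ) + 1) < ∑ i, (m i) ^ 2 := by
    have hr2 : (2 : ℤ) ≤ (r : ℤ) := by exact_mod_cast hr
    nlinarith [hextra', hS, hm0ge, ht1, htwo, mul_nonneg (sub_nonneg.2 ht1) (sub_nonneg.2 hr2)]
  nlinarith [hcs, hQbig]
end

section
/- Let X be a smooth projective surface over ℂ and L an ample line bundle on X. If C is an irreducible curve on X with (L·C)² ≥ L²·C², and C² ≥ m(m−1)+1 for an integer m ≥ 2 where m = mult_x(C), and (L·C)/m ≤ √(3/4)·√(L²), then m = 2 and C² = 3. -/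
/-- Hodge index `(L·C)² ≥ L²·C²`, Xu's bound `C² ≥ m(m−1)+1` for an integer `m ≥ 2`,
and the Seshadri bound `(L·C)/m ≤ √(3/4)·√(L²)` force `m = 2` and `C² = 3`. -/
theorem stmt_8 (L2 LC C2 : ℝ) (m : ℤ)
    (hL2 : 0 < L2) (hLC : 0 < LC)
    (hodge : LC ^ 2 ≥ L2 * C2)
    (hm : 2 ≤ m)
    (hxu : (m : ℝ) * ((m : ℝ) - 1) + 1 ≤ C2)
    (hses : LC / (m : ℝ) ≤ Real.sqrt (3 / 4) * Real.sqrt L2) :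
    m = 2 ∧ C2 = 3 := by
  have hm0 : (0:ℝ) < (m:ℝ) := by exact_mod_cast lt_of_lt_of_le two_pos hm
  have h1 : LC ≤ Real.sqrt (3/4) * Real.sqrt L2 * (m:ℝ) := (div_le_iff₀ hm0).mp hses
  have hsq : (Real.sqrt (3/4) * Real.sqrt L2)^2 = 3/4 * L2 := by
    rw [mul_pow, Real.sq_sqrt (by norm_num), Real.sq_sqrt hL2.le]
  have h2 : LC ^ 2 ≤ 3/4 * L2 * (m:ℝ)^2 := by
    have := mul_le_mul h1 h1 hLC.le (by positivity)
    nlinarith [this, hsq]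
  have h3 : L2 * C2 ≤ 3/4 * L2 * (m:ℝ)^2 := le_trans hodge h2
  have h4 : C2 ≤ 3/4 * (m:ℝ)^2 := by nlinarith
  have h5 : ((m:ℝ) - 2)^2 ≤ 0 := by nlinarith
  have hm2 : (m:ℝ) = 2 := by nlinarith [sq_nonneg ((m:ℝ) - 2)]
  have : m = 2 := by exact_mod_cast hm2
  subst this
  refine ⟨rfl, le_antisymm ?_ ?_⟩ <;> push_cast at h4 hxu <;> linarith
end
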